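/- Let f : A → B and g : B → C be central extensions of groups with B perfect, and let K = ker(g ∘ f). Then ⁅A, K⁆ = ⁅[A,A], K⁆ as subgroups of A. -/

import Mathlib

/-!
Since `B` is perfect and `f` is onto, `A = [A, A] · ker f`, and `ker f` is central. Multiplying an
element by a central one does not change its commutators, so every commutator `⁅a, k⁆` equals some
`⁅c, k⁆` with `c ∈ [A, A]`.
-/

open scoped commutatorElement

theorem commutatorElement_mul_mem_center_left {G : Type*} [Group G] (a k : G)
    {z : G} (hz : z ∈ Subgroup.center G) : ⁅a * z, k⁆ = ⁅a, k⁆ := by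
  have hzk : z * k = k * z := (Subgroup.mem_center_iff.mp hz k).symm
  rw [commutatorElement_def, commutatorElement_def, mul_inv_rev, mul_assoc a z k, hzk]
  group

theorem Subgroup.commutator_top_left_eq_of_sup_center_eq_top {G : Type*} [Group G]
    {H : Subgroup G} (N : Subgroup G) (hH : H ⊔ center G = ⊤) :
    ⁅(⊤ : Subgroup G), N⁆ = ⁅H, N⁆ := by
  refine le_antisymm ?_ (commutator_mono le_top le_rfl)
  rw [commutator_le]
  intro a _ k hk
  obtain ⟨c, hc, z, hz, rfl⟩ := mem_sup_of_normal_right.mp (hH ▸ mem_top a)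
  rw [commutatorElement_mul_mem_center_left c k hz]
  exact commutator_mem_commutator hc hk

theorem MonoidHom.commutator_sup_ker_eq_top {G B : Type*} [Group G] [Group B] {f : G →* B}
    (hf : Function.Surjective f) (hB : commutator B = ⊤) : commutator G ⊔ f.ker = ⊤ := by
  have hmap : (commutator G).map f = ⊤ := by
    rw [commutator, Subgroup.map_commutator, Subgroup.map_top_of_surjective f hf, ← commutator, hB]
  rw [← Subgroup.comap_map_eq, hmap, Subgroup.comap_top]

theorem stmt10_general {A B C : Type*} [Group A] [Group B] [Group C]
    (f : A →* B) (g : B →* C)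
    (hf : Function.Surjective f) (hfker : f.ker ≤ Subgroup.center A)
    (hB : commutator B = ⊤) :
    ⁅(⊤ : Subgroup A), (g.comp f).ker⁆ = ⁅commutator A, (g.comp f).ker⁆ := by
  refine Subgroup.commutator_top_left_eq_of_sup_center_eq_top _ (top_unique ?_)
  rw [← MonoidHom.commutator_sup_ker_eq_top hf hB]
  exact sup_le_sup_left hfker _

theorem stmt10 {A B C : Type*} [Group A] [Group B] [Group C]
    (f : A →* B) (g : B →* C)
    (hf : Function.Surjective f) (hfker : f.ker ≤ Subgroup.center A)
    (hg : Function.Surjective g) (hgker : g.ker ≤ Subgroup.center B)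
    (hB : commutator B = ⊤) :
    ⁅(⊤ : Subgroup A), (g.comp f).ker⁆ = ⁅commutator A, (g.comp f).ker⁆ :=
  stmt10_general f g hf hfker hB
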